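/- For supervised learning in Smooth with quadratic error loss, constant learning rate α, and basic gradient ascent, the composite put map satisfies put(a,p,b_t) = p + α·π₀(R[f](p, a, f(p,a) − b_t)), where π₀ projects the parameter component; i.e., the lens-composition formula simplifies to the standard gradient-update closed form. -/
import Mathlib


/-- The reverse derivative `R[h](x,v) = J[h](x)ᵀ·v`, given as the adjoint of
the Fréchet derivative. -/
noncomputable def Rev {E F : Type*} [NormedAddCommGroup E] [InnerProductSpace ℝ E]
    [CompleteSpace E] [NormedAddCommGroup F] [InnerProductSpace ℝ F] [CompleteSpace F]
    (h : E → F) (x : E) (v : F) : E :=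
  ContinuousLinearMap.adjoint (fderiv ℝ h x) v

/-- Supervised learning in Smooth with quadratic error loss, constant learning
rate α and basic gradient ascent: the composite put map satisfies
`put(a,p,b_t) = p + α·π₀(R[f](p, a, f(p,a) − b_t))`. -/
theorem supervised_learning_put_closed_form (pdim adim bdim : ℕ)
    (f : WithLp 2 (EuclideanSpace ℝ (Fin pdim) × EuclideanSpace ℝ (Fin adim)) →
      EuclideanSpace ℝ (Fin bdim))
    (hf : ContDiff ℝ (⊤ : ℕ∞) f) (α : ℝ)
    (a : EuclideanSpace ℝ (Fin adim)) (p : EuclideanSpace ℝ (Fin pdim))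
    (bt : EuclideanSpace ℝ (Fin bdim)) :
    -- component-split reverse derivative of the model
    let Rf : EuclideanSpace ℝ (Fin pdim) → EuclideanSpace ℝ (Fin adim) →
        EuclideanSpace ℝ (Fin bdim) →
        EuclideanSpace ℝ (Fin pdim) × EuclideanSpace ℝ (Fin adim) :=
      fun q x v => WithLp.equiv 2 _ (Rev f ((WithLp.equiv 2 _).symm (q, x)) v)
    -- the composite put map: prediction, loss backward pass with learning
    -- rate α, model backward pass, gradient-ascent parameter update
    let put : EuclideanSpace ℝ (Fin adim) → EuclideanSpace ℝ (Fin pdim) →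
        EuclideanSpace ℝ (Fin bdim) → EuclideanSpace ℝ (Fin pdim) :=
      fun a' p' bt' =>
        let bp := f ((WithLp.equiv 2 _).symm (p', a'))
        let btback := α • (bt' - bp)
        let bpback := α • (bp - bt')
        p' + (Rf p' a' bpback).1
    put a p bt = p + α • (Rf p a (f ((WithLp.equiv 2 _).symm (p, a)) - bt)).1 := by
  intro Rf put
  show p + (Rf p a (α • (f ((WithLp.equiv 2 _).symm (p, a)) - bt))).1 = _
  congr 1
  simp only [Rf, Rev, map_smul]
  rfl
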